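/- Let P be a finite connected poset and M : P → vec an interval decomposable persistence module, i.e., M ≅ ⊕_{i∈F} V_{J_i} for a finite family (J_i)_{i∈F} of intervals of P. Then the Int-generalized persistence diagram of M satisfies dgm_𝕀(M)(I) = #{i ∈ F : J_i = I} for every interval I ∈ Int(P). -/

import Mathlib

open scoped Classical
open Module

noncomputable section

/-- A pointwise finite-dimensional persistence module over a poset `P`. -/
structure PersMod (𝔽 : Type) [Field 𝔽] (P : Type) [PartialOrder P] where
  V : P → Type
  [iAdd : ∀ p, AddCommGroup (V p)]
  [iMod : ∀ p, Module 𝔽 (V p)]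
  [iFin : ∀ p, FiniteDimensional 𝔽 (V p)]
  φ : ∀ {p q : P}, p ≤ q → (V p →ₗ[𝔽] V q)
  φ_refl : ∀ p : P, φ (le_refl p) = LinearMap.id
  φ_comp : ∀ {p q r : P} (hpq : p ≤ q) (hqr : q ≤ r),
    (φ hqr).comp (φ hpq) = φ (le_trans hpq hqr)

attribute [instance] PersMod.iAdd PersMod.iMod PersMod.iFin

/-- A poset is connected if any two elements are joined by a finite zigzag of
comparable elements. -/
def ZigzagConnected (P : Type) [PartialOrder P] : Prop :=
  ∀ p q : P, Relation.ReflTransGen (fun a b : P => a ≤ b ∨ b ≤ a) p q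

section SetNotions

variable {P : Type} [PartialOrder P]

/-- Convexity of a subset of a poset. -/
def SetConvex (I : Set P) : Prop :=
  ∀ ⦃p q r : P⦄, p ∈ I → r ∈ I → p ≤ q → q ≤ r → q ∈ I

/-- Connectedness of a subset: any two points are joined by a zigzag of
comparable elements staying inside the subset. -/
def SetZigzagConn (I : Set P) : Prop :=
  ∀ p ∈ I, ∀ q ∈ I,
    Relation.ReflTransGen (fun a b : P => a ∈ I ∧ b ∈ I ∧ (a ≤ b ∨ b ≤ a)) p q

/-- An interval of a poset: nonempty, convex and connected. -/
def IsIntervalSet (I : Set P) : Prop :=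
  I.Nonempty ∧ SetConvex I ∧ SetZigzagConn I

/-- A path-connected subposet (member of `Con(P)`): nonempty and any two of its
points are joined by a sequence in `I` in which consecutive elements are related
by the covering relation of `P`. -/
def IsPathConnIn (I : Set P) : Prop :=
  I.Nonempty ∧ ∀ p ∈ I, ∀ q ∈ I,
    Relation.ReflTransGen (fun a b : P => a ∈ I ∧ b ∈ I ∧ (a ⋖ b ∨ b ⋖ a)) p q

lemma setConvex_univ : SetConvex (Set.univ : Set P) := by
  intro p q r _ _ _ _; trivial

end SetNotions

namespace PersMod

variable {𝔽 : Type} [Field 𝔽] {P : Type} [PartialOrder P]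

/-- The limit of a persistence module: the module of compatible sections. -/
def sections (M : PersMod 𝔽 P) : Submodule 𝔽 (∀ p, M.V p) where
  carrier := {x | ∀ (p q : P) (h : p ≤ q), M.φ h (x p) = x q}
  add_mem' := by
    intro x y hx hy p q h
    simp only [Pi.add_apply, map_add]
    rw [hx p q h, hy p q h]
  zero_mem' := by intro p q h; simp
  smul_mem' := by
    intro c x hx p q h
    simp only [Pi.smul_apply, map_smul]
    rw [hx p q h]

/-- The relations defining the colimit of a persistence module. -/
def colimRel (M : PersMod 𝔽 P) : Submodule 𝔽 (DirectSum P fun p => M.V p) :=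
  Submodule.span 𝔽 {z | ∃ (p q : P) (h : p ≤ q) (v : M.V p),
    z = DirectSum.lof 𝔽 P (fun p => M.V p) q (M.φ h v)
      - DirectSum.lof 𝔽 P (fun p => M.V p) p v}

/-- The colimit of a persistence module. -/
abbrev colim (M : PersMod 𝔽 P) :=
  (DirectSum P fun p => M.V p) ⧸ M.colimRel

/-- The canonical map `lim M → colim M` factored through the value at `p`,
i.e. `ι_p ∘ π_p`. -/
def canonicalMapAt (M : PersMod 𝔽 P) (p : P) : M.sections →ₗ[𝔽] M.colim :=
  (M.colimRel.mkQ.comp (DirectSum.lof 𝔽 P (fun q => M.V q) p)).comp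
    ((LinearMap.proj p).comp M.sections.subtype)

/-- The rank of the canonical map `lim M → colim M` computed through `p`. -/
def genRankAt (M : PersMod 𝔽 P) (p : P) : ℕ :=
  finrank 𝔽 (LinearMap.range (M.canonicalMapAt p))

/-- The generalized rank of a persistence module over a (connected) poset. -/
def genRank (M : PersMod 𝔽 P) [Nonempty P] : ℕ :=
  M.genRankAt (Classical.arbitrary P)

/-- Restriction of a persistence module to a subposet. -/
def restrict (M : PersMod 𝔽 P) (I : Set P) : PersMod 𝔽 I where
  V := fun i => M.V i.val
  φ := fun {i j} h => M.φ h
  φ_refl := fun i => M.φ_refl i.val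
  φ_comp := fun hpq hqr => M.φ_comp hpq hqr

/-- The generalized rank invariant: the generalized rank of the restriction
of `M` to `I`. -/
def rkInv (M : PersMod 𝔽 P) (I : Set P) : ℕ :=
  if h : I.Nonempty then (M.restrict I).genRankAt ⟨h.choose, h.choose_spec⟩ else 0

/-- Finite direct sums of persistence modules. -/
def dSum {F : Type} [Fintype F] (Ms : F → PersMod 𝔽 P) : PersMod 𝔽 P where
  V := fun p => ∀ i, (Ms i).V p
  φ := fun {p q} h => LinearMap.pi fun i => ((Ms i).φ h).comp (LinearMap.proj i)
  φ_refl := by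
    intro p
    refine LinearMap.ext fun x => funext fun i => ?_
    simp [(Ms i).φ_refl p]
  φ_comp := by
    intro p q r hpq hqr
    refine LinearMap.ext fun x => funext fun i => ?_
    simpa using LinearMap.congr_fun ((Ms i).φ_comp hpq hqr) (x i)

/-- Binary direct sum of persistence modules. -/
def prodMod (M N : PersMod 𝔽 P) : PersMod 𝔽 P where
  V := fun p => M.V p × N.V p
  φ := fun h => (M.φ h).prodMap (N.φ h)
  φ_refl := by
    intro p
    refine LinearMap.ext fun x => ?_
    simp [M.φ_refl p, N.φ_refl p]
  φ_comp := by
    intro p q r h1 h2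
    refine LinearMap.ext fun x => ?_
    have hM := LinearMap.congr_fun (M.φ_comp h1 h2) x.1
    have hN := LinearMap.congr_fun (N.φ_comp h1 h2) x.2
    simp only [LinearMap.comp_apply] at hM hN ⊢
    simp [hM, hN]

/-- The zero persistence module. -/
def IsZero (M : PersMod 𝔽 P) : Prop := ∀ p, Subsingleton (M.V p)

/-- Isomorphism of persistence modules. -/
def Isom (M N : PersMod 𝔽 P) : Prop :=
  ∃ e : ∀ p, M.V p ≃ₗ[𝔽] N.V p,
    ∀ (p q : P) (h : p ≤ q) (v : M.V p), e q (M.φ h v) = N.φ h (e p v)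

/-- Indecomposability of a persistence module. -/
def Indecomposable (M : PersMod 𝔽 P) : Prop :=
  ¬ M.IsZero ∧
    ∀ M₁ M₂ : PersMod 𝔽 P, M.Isom (M₁.prodMod M₂) → M₁.IsZero ∨ M₂.IsZero

end PersMod

section IntervalModule

variable {P : Type} [PartialOrder P]

/-- The fiber of the interval module at `p`: all of `𝔽` if `p ∈ I`, and `0`
otherwise. -/
def fiber (𝔽 : Type) [Field 𝔽] (I : Set P) (p : P) : Submodule 𝔽 𝔽 where
  carrier := {x | p ∈ I ∨ x = 0}
  zero_mem' := Or.inr rfl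
  add_mem' := by
    rintro x y (h | rfl) (h' | rfl)
    · exact Or.inl h
    · exact Or.inl h
    · exact Or.inl h'
    · exact Or.inr (add_zero 0)
  smul_mem' := by
    rintro c x (h | rfl)
    · exact Or.inl h
    · exact Or.inr (smul_zero c)

/-- The interval module `V_I` of a convex subset `I ⊆ P`. -/
def intervalModule (𝔽 : Type) [Field 𝔽] (I : Set P) (hc : SetConvex I) :
    PersMod 𝔽 P where
  V := fun p => fiber 𝔽 I p
  φ := fun {p q} _h =>
    LinearMap.restrict (if q ∈ I then LinearMap.id else 0)
      (by
        intro x hx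
        by_cases hq : q ∈ I
        · rw [if_pos hq]; exact Or.inl hq
        · rw [if_neg hq]; exact Or.inr rfl)
  φ_refl := by
    intro p
    refine LinearMap.ext fun x => Subtype.ext ?_
    rw [LinearMap.restrict_apply]
    by_cases hp : p ∈ I
    · simp [hp]
    · rcases x.2 with h | h
      · exact absurd h hp
      · simp [hp, h]
  φ_comp := by
    intro p q r hpq hqr
    refine LinearMap.ext fun x => Subtype.ext ?_
    simp only [LinearMap.comp_apply, LinearMap.restrict_apply]
    by_cases hr : r ∈ I <;> by_cases hq : q ∈ I <;> simp [hr, hq]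
    rcases x.2 with hp | h0
    · exact absurd (hc hp hr hpq hqr) hq
    · exact h0.symm

end IntervalModule

section Grid

variable {𝔽 : Type} [Field 𝔽]

lemma le_sub_e1 (p : ℤ × ℤ) : ((p.1 - 1, p.2) : ℤ × ℤ) ≤ p :=
  Prod.le_def.mpr ⟨show p.1 - 1 ≤ p.1 by omega, le_rfl⟩

lemma le_sub_e2 (p : ℤ × ℤ) : ((p.1, p.2 - 1) : ℤ × ℤ) ≤ p :=
  Prod.le_def.mpr ⟨le_rfl, show p.2 - 1 ≤ p.2 by omega⟩

lemma le_sub_e12_e1 (p : ℤ × ℤ) : ((p.1 - 1, p.2 - 1) : ℤ × ℤ) ≤ (p.1 - 1, p.2) :=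
  Prod.le_def.mpr ⟨le_rfl, show p.2 - 1 ≤ p.2 by omega⟩

lemma le_sub_e12_e2 (p : ℤ × ℤ) : ((p.1 - 1, p.2 - 1) : ℤ × ℤ) ≤ (p.1, p.2 - 1) :=
  Prod.le_def.mpr ⟨show p.1 - 1 ≤ p.1 by omega, le_rfl⟩

/-- The `0`-th bigraded Betti number of `M : ℤ² → vec` at `p`, defined via the
Koszul complex as the dimension of the cokernel of
`M(p-e₁) ⊕ M(p-e₂) → M(p)`. -/
def beta0 (M : PersMod 𝔽 (ℤ × ℤ)) (p : ℤ × ℤ) : ℕ :=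
  finrank 𝔽
    (M.V p ⧸ LinearMap.range ((M.φ (le_sub_e1 p)).coprod (M.φ (le_sub_e2 p))))

/-- The `2`-nd bigraded Betti number of `M : ℤ² → vec` at `p`, defined via the
Koszul complex as the dimension of the intersection of the kernels of the two
structure maps out of `M(p-e₁-e₂)`. -/
def beta2 (M : PersMod 𝔽 (ℤ × ℤ)) (p : ℤ × ℤ) : ℕ :=
  finrank 𝔽
    ↥(LinearMap.ker (M.φ (le_sub_e12_e1 p)) ⊓ LinearMap.ker (M.φ (le_sub_e12_e2 p)))

/-- The `1`-st bigraded Betti number of `M : ℤ² → vec` at `p`, via the Koszul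
complex characterization. -/
def beta1 (M : PersMod 𝔽 (ℤ × ℤ)) (p : ℤ × ℤ) : ℤ :=
  (beta0 M p : ℤ) + (beta2 M p : ℤ)
    - (finrank 𝔽 (M.V p) : ℤ) + (finrank 𝔽 (M.V (p.1 - 1, p.2)) : ℤ)
    + (finrank 𝔽 (M.V (p.1, p.2 - 1)) : ℤ) - (finrank 𝔽 (M.V (p.1 - 1, p.2 - 1)) : ℤ)

/-- The maximal element of the grid `[m] × [n]` below a point `p ≥ (0,0)` of `ℤ²`. -/
def clamp (m n : ℕ) (p : ℤ × ℤ) : Fin (m + 1) × Fin (n + 1) :=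
  (⟨min p.1.toNat m, Nat.lt_succ_of_le (min_le_right _ _)⟩,
   ⟨min p.2.toNat n, Nat.lt_succ_of_le (min_le_right _ _)⟩)

lemma clamp_mono {m n : ℕ} {p q : ℤ × ℤ} (h : p ≤ q) : clamp m n p ≤ clamp m n q := by
  obtain ⟨h1, h2⟩ := Prod.le_def.mp h
  refine Prod.le_def.mpr ⟨?_, ?_⟩
  · exact Fin.mk_le_mk.mpr (min_le_min (Int.toNat_le_toNat h1) le_rfl)
  · exact Fin.mk_le_mk.mpr (min_le_min (Int.toNat_le_toNat h2) le_rfl)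

/-- `M : ℤ² → vec` is encoded by `M' : [m] × [n] → vec`. -/
def IsEncodedBy {m n : ℕ} (M : PersMod 𝔽 (ℤ × ℤ))
    (M' : PersMod 𝔽 (Fin (m + 1) × Fin (n + 1))) : Prop :=
  (∀ p : ℤ × ℤ, ¬(0 ≤ p.1 ∧ 0 ≤ p.2) → Subsingleton (M.V p)) ∧
  ∃ e : ∀ p : ℤ × ℤ, 0 ≤ p.1 → 0 ≤ p.2 → (M.V p ≃ₗ[𝔽] M'.V (clamp m n p)),
    ∀ (p q : ℤ × ℤ) (hp1 : 0 ≤ p.1) (hp2 : 0 ≤ p.2) (hq1 : 0 ≤ q.1) (hq2 : 0 ≤ q.2)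
      (hpq : p ≤ q) (v : M.V p),
      e q hq1 hq2 (M.φ hpq v) = M'.φ (clamp_mono hpq) (e p hp1 hp2 v)

/-- A point `a ∈ ℤ²` "belongs" to `J ⊆ [m] × [n]` if it is a grid point lying in `J`. -/
def gridPt {m n : ℕ} (a : ℤ × ℤ) (J : Set (Fin (m + 1) × Fin (n + 1))) : Prop :=
  ∃ x ∈ J, (((x.1 : ℕ) : ℤ), ((x.2 : ℕ) : ℤ)) = a

end Grid

/-!
The generalized rank at a fixed point is invariant under isomorphism and additive over finite
direct sums, because sections and colimits commute with finite direct sums. For an interval module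
`V_J` restricted to an interval `I` it is `1` if `I ⊆ J`, where the constant section `1` is
detected by the functional on the colimit that is the identity of `𝔽` at every point, and `0`
otherwise, because on the connected poset `I` the canonical map can be computed at a point of
`I \ J`, where `V_J` vanishes. Hence `rk(M)(I) = #{i | I ⊆ J_i} = ∑_{J ⊇ I} #{i | J_i = J}`, and
this triangular system over the finite poset of intervals determines `dgm_𝕀(M)` by downward
induction.
-/

namespace LinearMap

universe u

variable {K : Type*} {V V' V'' V''' : Type u} [Field K] [AddCommGroup V] [Module K V]
  [AddCommGroup V'] [Module K V'] [AddCommGroup V''] [Module K V''] [AddCommGroup V''']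
  [Module K V''']

theorem finrank_range_comp_le_right (g : V →ₗ[K] V') (f : V' →ₗ[K] V'')
    [FiniteDimensional K (range g)] : finrank K (range (f ∘ₗ g)) ≤ finrank K (range g) :=
  Cardinal.toNat_le_toNat (rank_comp_le_right g f) (rank_lt_aleph0 K _)

theorem finrank_range_comp_comp_le (h : V →ₗ[K] V') (g : V' →ₗ[K] V'') (f : V'' →ₗ[K] V''')
    [FiniteDimensional K (range g)] : finrank K (range (f ∘ₗ g ∘ₗ h)) ≤ finrank K (range g) :=
  Cardinal.toNat_le_toNat ((rank_comp_le_right _ f).trans (rank_comp_le_left h g))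
    (rank_lt_aleph0 K _)

theorem finrank_range_piMap {ι : Type*} [Fintype ι] {M N : ι → Type*} [∀ i, AddCommGroup (M i)]
    [∀ i, Module K (M i)] [∀ i, AddCommGroup (N i)] [∀ i, Module K (N i)]
    (f : ∀ i, M i →ₗ[K] N i) [∀ i, FiniteDimensional K (range (f i))] :
    finrank K (range (piMap f)) = ∑ i, finrank K (range (f i)) := by
  have hfactor : piMap f =
      piMap (fun i => (range (f i)).subtype) ∘ₗ piMap fun i => (f i).rangeRestrict := rfl
  rw [hfactor, range_comp_of_range_eq_top _ (range_eq_top.2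
      (Function.Surjective.piMap fun i => (f i).surjective_rangeRestrict)),
    finrank_range_of_inj (Function.Injective.piMap fun i => Subtype.val_injective),
    finrank_pi_fintype]

end LinearMap

lemma SetZigzagConn.zigzagConnected {P : Type} [PartialOrder P] {I : Set P}
    (hI : SetZigzagConn I) : ZigzagConnected I := by
  rintro ⟨p, hp⟩ ⟨q, hq⟩
  suffices ∀ r, Relation.ReflTransGen (fun a b : P => a ∈ I ∧ b ∈ I ∧ (a ≤ b ∨ b ≤ a)) p r →
      ∀ hr : r ∈ I, Relation.ReflTransGen (fun a b : I => a ≤ b ∨ b ≤ a) ⟨p, hp⟩ ⟨r, hr⟩ from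
    this q (hI p hp q hq) hq
  intro r hpr
  induction hpr with
  | refl => exact fun _ => .refl
  | tail _ hbc ih => exact fun _ => (ih hbc.1).tail hbc.2.2

namespace PersMod

variable {𝔽 : Type} [Field 𝔽] {Q : Type} [PartialOrder Q]

lemma canonicalMapAt_apply (M : PersMod 𝔽 Q) (p : Q) (x : M.sections) :
    M.canonicalMapAt p x = M.colimRel.mkQ (DirectSum.lof 𝔽 Q M.V p (x.1 p)) :=
  rfl

instance finiteDimensional_range_canonicalMapAt (M : PersMod 𝔽 Q) (p : Q) :
    FiniteDimensional 𝔽 (LinearMap.range (M.canonicalMapAt p)) :=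
  Submodule.finiteDimensional_of_le (LinearMap.range_comp_le_range _ _)

lemma mkQ_lof_φ (M : PersMod 𝔽 Q) {p q : Q} (h : p ≤ q) (v : M.V p) :
    M.colimRel.mkQ (DirectSum.lof 𝔽 Q M.V q (M.φ h v))
      = M.colimRel.mkQ (DirectSum.lof 𝔽 Q M.V p v) := by
  rw [← sub_eq_zero, ← map_sub, Submodule.mkQ_apply, Submodule.Quotient.mk_eq_zero]
  exact Submodule.subset_span ⟨p, q, h, v, rfl⟩

lemma canonicalMapAt_eq_of_le (M : PersMod 𝔽 Q) {p q : Q} (h : p ≤ q) :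
    M.canonicalMapAt p = M.canonicalMapAt q := by
  ext x
  rw [canonicalMapAt_apply, canonicalMapAt_apply, ← x.2 p q h, mkQ_lof_φ]

lemma canonicalMapAt_eq_of_zigzagConnected (M : PersMod 𝔽 Q) (hQ : ZigzagConnected Q)
    (p q : Q) : M.canonicalMapAt p = M.canonicalMapAt q := by
  induction hQ p q with
  | refl => rfl
  | tail _ hbc ih =>
    rcases hbc with h | h
    · exact ih.trans (M.canonicalMapAt_eq_of_le h)
    · exact ih.trans (M.canonicalMapAt_eq_of_le h).symm

def colimDesc (M : PersMod 𝔽 Q) {W : Type*} [AddCommGroup W] [Module 𝔽 W]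
    (f : ∀ p, M.V p →ₗ[𝔽] W) (hf : ∀ {p q : Q} (h : p ≤ q) (v : M.V p), f q (M.φ h v) = f p v) :
    M.colim →ₗ[𝔽] W :=
  M.colimRel.liftQ (DirectSum.toModule 𝔽 Q W f) <| by
    rw [colimRel, Submodule.span_le]
    rintro _ ⟨p, q, h, v, rfl⟩
    simp [hf]

@[simp]
lemma colimDesc_mkQ_lof (M : PersMod 𝔽 Q) {W : Type*} [AddCommGroup W] [Module 𝔽 W]
    (f : ∀ p, M.V p →ₗ[𝔽] W) (hf : ∀ {p q : Q} (h : p ≤ q) (v : M.V p), f q (M.φ h v) = f p v)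
    (p : Q) (v : M.V p) :
    M.colimDesc f hf (M.colimRel.mkQ (DirectSum.lof 𝔽 Q M.V p v)) = f p v := by
  simp [colimDesc]

lemma genRankAt_le_finrank (M : PersMod 𝔽 Q) (p : Q) : M.genRankAt p ≤ finrank 𝔽 (M.V p) :=
  (Submodule.finrank_mono (LinearMap.range_comp_le_range _ _)).trans
    (LinearMap.finrank_range_le _)

structure Hom (M N : PersMod 𝔽 Q) where
  app : ∀ p, M.V p →ₗ[𝔽] N.V p
  naturality : ∀ {p q : Q} (h : p ≤ q) (v : M.V p), app q (M.φ h v) = N.φ h (app p v)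

namespace Hom

variable {M N : PersMod 𝔽 Q} (α : Hom M N)

def onSections : M.sections →ₗ[𝔽] N.sections :=
  LinearMap.codRestrict N.sections
    ((LinearMap.pi fun p => α.app p ∘ₗ LinearMap.proj p) ∘ₗ M.sections.subtype)
    fun x p q h => by simp [← α.naturality, x.2 p q h]

lemma colimRel_le_comap : M.colimRel ≤ N.colimRel.comap (DirectSum.lmap α.app) := by
  rw [colimRel, Submodule.span_le]
  rintro _ ⟨p, q, h, v, rfl⟩
  simp only [SetLike.mem_coe, Submodule.mem_comap, map_sub, DirectSum.lmap_lof, α.naturality]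
  exact Submodule.subset_span ⟨p, q, h, α.app p v, rfl⟩

def onColim : M.colim →ₗ[𝔽] N.colim :=
  M.colimRel.mapQ N.colimRel (DirectSum.lmap α.app) α.colimRel_le_comap

@[simp]
lemma onColim_mkQ_lof (p : Q) (v : M.V p) :
    α.onColim (M.colimRel.mkQ (DirectSum.lof 𝔽 Q M.V p v))
      = N.colimRel.mkQ (DirectSum.lof 𝔽 Q N.V p (α.app p v)) := by
  simp [onColim]

lemma canonicalMapAt_comp_onSections (p : Q) :
    N.canonicalMapAt p ∘ₗ α.onSections = α.onColim ∘ₗ M.canonicalMapAt p := by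
  ext x
  exact (α.onColim_mkQ_lof p (x.1 p)).symm

end Hom

lemma symm_naturality {M N : PersMod 𝔽 Q} {e : ∀ p, M.V p ≃ₗ[𝔽] N.V p}
    (he : ∀ (p q : Q) (h : p ≤ q) (v : M.V p), e q (M.φ h v) = N.φ h (e p v))
    (p q : Q) (h : p ≤ q) (w : N.V p) : (e q).symm (N.φ h w) = M.φ h ((e p).symm w) :=
  (e q).injective (by rw [he, LinearEquiv.apply_symm_apply, LinearEquiv.apply_symm_apply])

lemma Isom.symm {M N : PersMod 𝔽 Q} (h : M.Isom N) : N.Isom M :=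
  let ⟨_, he⟩ := h
  ⟨_, symm_naturality he⟩

lemma Isom.restrict {M N : PersMod 𝔽 Q} (h : M.Isom N) (I : Set Q) :
    (M.restrict I).Isom (N.restrict I) :=
  let ⟨e, he⟩ := h
  ⟨fun p => e p, fun p q h v => he p q h v⟩

lemma genRankAt_le_of_retraction {M N : PersMod 𝔽 Q} (α : Hom M N) (β : Hom N M)
    (hβα : ∀ p v, β.app p (α.app p v) = v) (p : Q) : M.genRankAt p ≤ N.genRankAt p := by
  have hfactor : M.canonicalMapAt p = β.onColim ∘ₗ N.canonicalMapAt p ∘ₗ α.onSections := by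
    ext x
    change M.colimRel.mkQ (DirectSum.lof 𝔽 Q M.V p (x.1 p))
      = β.onColim (N.colimRel.mkQ (DirectSum.lof 𝔽 Q N.V p (α.app p (x.1 p))))
    rw [Hom.onColim_mkQ_lof, hβα]
  rw [genRankAt, hfactor]
  exact LinearMap.finrank_range_comp_comp_le _ _ _

lemma Isom.genRankAt_eq {M N : PersMod 𝔽 Q} (h : M.Isom N) (p : Q) :
    M.genRankAt p = N.genRankAt p := by
  suffices ∀ {M N : PersMod 𝔽 Q}, M.Isom N → M.genRankAt p ≤ N.genRankAt p from
    le_antisymm (this h) (this h.symm)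
  rintro M N ⟨e, he⟩
  exact genRankAt_le_of_retraction ⟨fun p => e p, he _ _⟩
    ⟨fun p => (e p).symm, symm_naturality he _ _⟩ (fun p v => (e p).symm_apply_apply v) p

section DirectSum

variable {F : Type} [Fintype F] (Ms : F → PersMod 𝔽 Q)

def dSumProj (i : F) : Hom (dSum Ms) (Ms i) where
  app _ := LinearMap.proj i
  naturality _ _ := rfl

def dSumSingle (i : F) : Hom (Ms i) (dSum Ms) where
  app p := LinearMap.single 𝔽 (fun i => (Ms i).V p) i
  naturality h v := funext fun j =>
    (Pi.apply_single (fun j => (Ms j).φ h) (fun _ => map_zero _) i v j).symm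

theorem genRankAt_dSum (p : Q) :
    (dSum Ms).genRankAt p = ∑ i, (Ms i).genRankAt p := by
  let C := LinearMap.piMap fun i => (Ms i).canonicalMapAt p
  let Ψ := LinearMap.pi fun i => (dSumProj Ms i).onSections
  let Φ := LinearMap.pi fun i => (dSumProj Ms i).onColim
  let Θ := ∑ i, (dSumSingle Ms i).onColim ∘ₗ LinearMap.proj i
  have hΨ : Function.Surjective Ψ := fun y =>
    ⟨⟨fun p i => (y i).1 p, fun p q h => funext fun i => (y i).2 p q h⟩, rfl⟩
  have hΦ : C ∘ₗ Ψ = Φ ∘ₗ (dSum Ms).canonicalMapAt p := by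
    ext x : 1
    funext i
    exact LinearMap.congr_fun ((dSumProj Ms i).canonicalMapAt_comp_onSections p) x
  have hΘ : (dSum Ms).canonicalMapAt p = Θ ∘ₗ C ∘ₗ Ψ := by
    ext x
    rw [LinearMap.comp_apply, LinearMap.comp_apply, LinearMap.sum_apply]
    change _ = ∑ i, (dSumSingle Ms i).onColim
      ((Ms i).colimRel.mkQ (DirectSum.lof 𝔽 Q (Ms i).V p (x.1 p i)))
    simp only [Hom.onColim_mkQ_lof, ← map_sum]
    exact congrArg _ (congrArg _ (Finset.univ_sum_single (x.1 p)).symm)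
  have hrange : LinearMap.range C = LinearMap.range (Φ ∘ₗ (dSum Ms).canonicalMapAt p) := by
    rw [← LinearMap.range_comp_of_range_eq_top C (LinearMap.range_eq_top.2 hΨ), hΦ]
  have : FiniteDimensional 𝔽 (LinearMap.range C) := by
    rw [hrange, LinearMap.range_comp]
    infer_instance
  have hle : finrank 𝔽 (LinearMap.range ((dSum Ms).canonicalMapAt p))
      ≤ finrank 𝔽 (LinearMap.range C) := by
    rw [hΘ]
    exact LinearMap.finrank_range_comp_comp_le _ _ _
  have hge : finrank 𝔽 (LinearMap.range C)
      ≤ finrank 𝔽 (LinearMap.range ((dSum Ms).canonicalMapAt p)) := by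
    rw [hrange]
    exact LinearMap.finrank_range_comp_le_right _ _
  rw [genRankAt, le_antisymm hle hge, LinearMap.finrank_range_piMap]
  rfl

end DirectSum

end PersMod

section IntervalModule

lemma fiber_subsingleton {𝔽 : Type} [Field 𝔽] {P : Type} {J : Set P} {p : P} (hp : p ∉ J) :
    Subsingleton (fiber 𝔽 J p) :=
  ⟨fun v w => Subtype.ext ((v.2.resolve_left hp).trans (w.2.resolve_left hp).symm)⟩

variable {𝔽 : Type} [Field 𝔽] {P : Type} [PartialOrder P] {J : Set P}

lemma intervalModule_φ_val_of_mem (hc : SetConvex J) {p q : P} (h : p ≤ q) (hq : q ∈ J)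
    (v : fiber 𝔽 J p) : ((intervalModule 𝔽 J hc).φ h v : fiber 𝔽 J q).val = v.val := by
  change (if q ∈ J then LinearMap.id else 0) v.val = v.val
  rw [if_pos hq, LinearMap.id_apply]

variable (𝔽) {I : Set P} (hc : SetConvex J)

lemma genRankAt_restrict_intervalModule_of_subset (hIJ : I ⊆ J) (p : I) :
    ((intervalModule 𝔽 J hc).restrict I).genRankAt p = 1 := by
  set N := (intervalModule 𝔽 J hc).restrict I
  let ε := N.colimDesc (fun p => (fiber 𝔽 J p.1).subtype)
    fun {_ q} h v => intervalModule_φ_val_of_mem hc h (hIJ q.2) v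
  let one : N.sections := ⟨fun q => ⟨1, Or.inl (hIJ q.2)⟩, fun _ q h =>
    Subtype.ext (intervalModule_φ_val_of_mem hc h (hIJ q.2) _)⟩
  have hone : ε (N.canonicalMapAt p one) = 1 := N.colimDesc_mkQ_lof _ _ p _
  refine le_antisymm ((N.genRankAt_le_finrank p).trans ?_) ?_
  · exact (Submodule.finrank_le _).trans_eq (finrank_self 𝔽)
  · refine Nat.one_le_iff_ne_zero.2 fun h0 => one_ne_zero (α := 𝔽) ?_
    rw [PersMod.genRankAt, Submodule.finrank_eq_zero, LinearMap.range_eq_bot] at h0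
    rw [← hone, h0, LinearMap.zero_apply, map_zero]

lemma genRankAt_restrict_intervalModule_of_not_subset (hI : SetZigzagConn I) (hIJ : ¬ I ⊆ J)
    (p : I) : ((intervalModule 𝔽 J hc).restrict I).genRankAt p = 0 := by
  obtain ⟨w, hwI, hwJ⟩ := Set.not_subset.1 hIJ
  have : Subsingleton (((intervalModule 𝔽 J hc).restrict I).V ⟨w, hwI⟩) :=
    fiber_subsingleton hwJ
  have hzero : ((intervalModule 𝔽 J hc).restrict I).canonicalMapAt ⟨w, hwI⟩ = 0 := by
    ext x
    rw [PersMod.canonicalMapAt_apply, Subsingleton.elim (x.1 ⟨w, hwI⟩) 0, map_zero, map_zero,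
      LinearMap.zero_apply]
  rw [PersMod.genRankAt,
    PersMod.canonicalMapAt_eq_of_zigzagConnected _ hI.zigzagConnected p ⟨w, hwI⟩, hzero,
    LinearMap.range_zero, finrank_bot]

lemma genRankAt_restrict_intervalModule (hI : SetZigzagConn I) (p : I) :
    ((intervalModule 𝔽 J hc).restrict I).genRankAt p = if I ⊆ J then 1 else 0 := by
  split_ifs with hIJ
  · exact genRankAt_restrict_intervalModule_of_subset 𝔽 hc hIJ p
  · exact genRankAt_restrict_intervalModule_of_not_subset 𝔽 hc hI hIJ p

end IntervalModule

theorem rkInv_eq_card_of_isom_dSum_intervalModule {𝔽 : Type} [Field 𝔽] {P : Type}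
    [PartialOrder P] (M : PersMod 𝔽 P) {F : Type} [Fintype F] {Js : F → Set P}
    (hc : ∀ i, SetConvex (Js i))
    (hiso : M.Isom (PersMod.dSum fun i => intervalModule 𝔽 (Js i) (hc i)))
    {I : Set P} (hI : IsIntervalSet I) : M.rkInv I = Nat.card {i // I ⊆ Js i} := by
  rw [PersMod.rkInv, dif_pos hI.1, (hiso.restrict I).genRankAt_eq]
  -- the restriction of a direct sum is definitionally the direct sum of the restrictions
  change (PersMod.dSum fun i => (intervalModule 𝔽 (Js i) (hc i)).restrict I).genRankAt _ = _
  simp only [PersMod.genRankAt_dSum, genRankAt_restrict_intervalModule 𝔽 _ hI.2.2,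
    Finset.sum_boole, Nat.card_eq_fintype_card, Fintype.card_subtype, Nat.cast_id]

section FiniteOrder

variable {α : Type*} [PartialOrder α] [Finite α] {S : α → Prop}

theorem eq_of_finsum_Ici_eq {G : Type*} [AddCancelCommMonoid G] {f g : α → G}
    (h : ∀ a, S a → ∑ᶠ (b) (_ : S b ∧ a ≤ b), f b = ∑ᶠ (b) (_ : S b ∧ a ≤ b), g b) :
    ∀ a, S a → f a = g a := by
  intro a
  induction a using WellFoundedGT.induction with
  | _ a ih =>
  intro ha
  have hsplit : {b | S b ∧ a ≤ b} = insert a {b | S b ∧ a < b} := by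
    ext b
    simp only [Set.mem_ofPred_eq, Set.mem_insert_iff, le_iff_eq_or_lt]
    constructor
    · rintro ⟨hb, rfl | hab⟩
      exacts [Or.inl rfl, Or.inr ⟨hb, hab⟩]
    · rintro (rfl | ⟨hb, hab⟩)
      exacts [⟨ha, Or.inl rfl⟩, ⟨hb, Or.inr hab⟩]
  have hnot : a ∉ {b | S b ∧ a < b} := fun h => lt_irrefl a h.2
  have key : ∑ᶠ b ∈ {b | S b ∧ a ≤ b}, f b = ∑ᶠ b ∈ {b | S b ∧ a ≤ b}, g b := h a ha
  rw [hsplit, finsum_mem_insert _ hnot (Set.toFinite _),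
    finsum_mem_insert _ hnot (Set.toFinite _),
    finsum_mem_congr rfl fun b hb => ih b hb.2 hb.1] at key
  exact add_right_cancel key

theorem card_le_eq_finsum_card_eq {F : Type*} [Fintype F] {Js : F → α} (hJs : ∀ i, S (Js i))
    (a : α) : (Nat.card {i // a ≤ Js i} : ℤ)
      = ∑ᶠ (b) (_ : S b ∧ a ≤ b), (Nat.card {i // Js i = b} : ℤ) := by
  classical
  have := Fintype.ofFinite α
  rw [finsum_cond_eq_sum_of_cond_iff _ (t := {b | S b ∧ a ≤ b}) fun _ => by simp]
  simp only [Nat.card_eq_fintype_card, Fintype.card_subtype]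
  rw [Finset.card_eq_sum_card_fiberwise (f := Js) (t := {b | S b ∧ a ≤ b})
    fun i hi => by simpa [hJs i] using hi]
  push_cast
  refine Finset.sum_congr rfl fun b hb => ?_
  congr 2
  ext i
  simp only [Finset.mem_filter, Finset.mem_univ, true_and, and_iff_right_iff_imp]
  rintro rfl
  exact (Finset.mem_filter.1 hb).2.2

end FiniteOrder

theorem dgmInt_of_intervalDecomposable_general (𝔽 : Type) [Field 𝔽] (P : Type)
    [PartialOrder P] [Fintype P] (M : PersMod 𝔽 P)
    (F : Type) [Fintype F] (Js : F → Set P) (hJ : ∀ i, IsIntervalSet (Js i))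
    (hiso : M.Isom (PersMod.dSum fun i => intervalModule 𝔽 (Js i) (hJ i).2.1))
    (dgmInt : Set P → ℤ)
    (hdgm : ∀ I : Set P, IsIntervalSet I →
      (M.rkInv I : ℤ) = ∑ᶠ (J : Set P) (_ : IsIntervalSet J ∧ I ⊆ J), dgmInt J) :
    ∀ I : Set P, IsIntervalSet I → dgmInt I = Nat.card {i : F // Js i = I} :=
  eq_of_finsum_Ici_eq fun I hI => by
    rw [← hdgm I hI, rkInv_eq_card_of_isom_dSum_intervalModule M _ hiso hI]
    exact card_le_eq_finsum_card_eq hJ I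

/-- For an interval decomposable module
`M ≅ ⊕_{i ∈ F} V_{J_i}` over a finite connected poset, the `Int`-generalized
persistence diagram of `M` equals the multiplicity function of the barcode:
`dgm_𝕀(M)(I) = #{i : J_i = I}` for every interval `I`. -/
theorem dgmInt_of_intervalDecomposable (𝔽 : Type) [Field 𝔽] (P : Type)
    [PartialOrder P] [Fintype P] (hconn : ZigzagConnected P) (M : PersMod 𝔽 P)
    (F : Type) [Fintype F] (Js : F → Set P) (hJ : ∀ i, IsIntervalSet (Js i))
    (hiso : M.Isom (PersMod.dSum fun i => intervalModule 𝔽 (Js i) (hJ i).2.1))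
    (dgmInt : Set P → ℤ)
    (hdgm : ∀ I : Set P, IsIntervalSet I →
      (M.rkInv I : ℤ) = ∑ᶠ (J : Set P) (_ : IsIntervalSet J ∧ I ⊆ J), dgmInt J) :
    ∀ I : Set P, IsIntervalSet I → dgmInt I = Nat.card {i : F // Js i = I} :=
  dgmInt_of_intervalDecomposable_general 𝔽 P M F Js hJ hiso dgmInt hdgm
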